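/- arXiv:2210.06573 — 2 statements merged into one kernel-verified Lean document; each statement's English description precedes it below -/
import Mathlib

section
/- In the integral group ring ℤ[C₇], the element u := 2 + 2t − t³ − t⁴ − t⁵ is a unit with two-sided inverse v := 1 − 2t + 3t² − 3t³ + 3t⁴ − 2t⁵ + t⁶; that is, u·v = 1 and v·u = 1. -/
/-- `C₇`, the multiplicative cyclic group of order 7. -/
abbrev C7 : Type := Multiplicative (ZMod 7)

/-- The generator `t` of `C₇`, viewed inside the integral group ring `ℤ[C₇]`. -/
noncomputable def t : MonoidAlgebra ℤ C7 :=
  MonoidAlgebra.of ℤ C7 (Multiplicative.ofAdd (1 : ZMod 7))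

/-- The unit `u = 2 + 2t − t³ − t⁴ − t⁵` of `ℤ[C₇]`. -/
noncomputable def u : MonoidAlgebra ℤ C7 := 2 + 2 * t - t ^ 3 - t ^ 4 - t ^ 5

/-- The inverse `v = 1 − 2t + 3t² − 3t³ + 3t⁴ − 2t⁵ + t⁶`. -/
noncomputable def v : MonoidAlgebra ℤ C7 :=
  1 - 2 * t + 3 * t ^ 2 - 3 * t ^ 3 + 3 * t ^ 4 - 2 * t ^ 5 + t ^ 6

lemma t7 : t ^ 7 = 1 := by
  rw [t, ← map_pow]
  have : (Multiplicative.ofAdd (1 : ZMod 7)) ^ 7 = 1 := by decide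
  rw [this, map_one]

/-- In `ℤ[C₇]`, `u = 2 + 2t − t³ − t⁴ − t⁵` is a unit with two-sided
inverse `v = 1 − 2t + 3t² − 3t³ + 3t⁴ − 2t⁵ + t⁶`. -/
theorem u_mul_v_eq_one : u * v = 1 ∧ v * u = 1 := by
  constructor <;>
  · rw [u, v]
    linear_combination (-1 + 2*t - 2*t^2 + t^3 - t^4) * t7
end

section
/- For every prime p, the commutative square of commutative rings with vertices ℤ[C_p] ≅ ℤ[X]/(X^p − 1), ℤ[ζ_p] := ℤ[X]/(Φ_p(X)), ℤ, and ℤ/p — where ℤ[C_p] → ℤ[ζ_p] is the quotient map X ↦ X, ℤ[C_p] → ℤ is the augmentation X ↦ 1, ℤ[ζ_p] → ℤ/p sends X ↦ 1, and ℤ → ℤ/p is reduction modulo p — is a pullback square of rings: the induced ring homomorphism ℤ[C_p] → ℤ ×_{ℤ/p} ℤ[ζ_p] is bijective. Moreover the map ℤ → ℤ/p is surjective, so the square is a Milnor square. -/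
open Polynomial

/-- The integral group ring `ℤ[C_p] ≅ ℤ[X]/(X^p − 1)`. -/
noncomputable abbrev GroupRingCp (p : ℕ) : Type :=
  Polynomial ℤ ⧸ Ideal.span {(X : Polynomial ℤ) ^ p - 1}

/-- The `p`-th cyclotomic polynomial `Φ_p(X) = 1 + X + ⋯ + X^{p−1}` over `ℤ`. -/
noncomputable def Phi (p : ℕ) : Polynomial ℤ := ∑ i ∈ Finset.range p, X ^ i

/-- The cyclotomic integers `ℤ[ζ_p] := ℤ[X]/(Φ_p(X))`. -/
noncomputable abbrev CycloInt (p : ℕ) : Type := Polynomial ℤ ⧸ Ideal.span {Phi p}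

lemma geom_dvd (p : ℕ) : Phi p ∣ (X : Polynomial ℤ) ^ p - 1 :=
  ⟨X - 1, by rw [Phi, geom_sum_mul]⟩

/-- The quotient map `ℤ[C_p] → ℤ[ζ_p]`, `X ↦ X`. -/
noncomputable def toCyclo (p : ℕ) : GroupRingCp p →+* CycloInt p :=
  Ideal.Quotient.lift _ (Ideal.Quotient.mk (Ideal.span {Phi p})) (by
    intro a ha
    rw [Ideal.Quotient.eq_zero_iff_mem]
    exact (Ideal.span_singleton_le_span_singleton.mpr (geom_dvd p)) ha)

/-- The augmentation `ℤ[C_p] → ℤ`, `X ↦ 1`. -/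
noncomputable def aug (p : ℕ) : GroupRingCp p →+* ℤ :=
  Ideal.Quotient.lift _ (evalRingHom 1) (by
    intro a ha
    rw [Ideal.mem_span_singleton] at ha
    obtain ⟨c, rfl⟩ := ha
    simp)

/-- The ring map `ℤ[ζ_p] → ℤ/p` sending (the class of) `X` to `1`. -/
noncomputable def cycloToZMod (p : ℕ) : CycloInt p →+* ZMod p :=
  Ideal.Quotient.lift _ (eval₂RingHom (Int.castRingHom (ZMod p)) 1) (by
    intro a ha
    rw [Ideal.mem_span_singleton] at ha
    obtain ⟨c, rfl⟩ := ha
    have h : (eval₂RingHom (Int.castRingHom (ZMod p)) 1) (Phi p) = 0 := by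
      simp [Phi, map_sum, ZMod.natCast_self]
    rw [map_mul, h, zero_mul])

/-- For every prime `p`, the square of rings
`ℤ[C_p] → ℤ[ζ_p]`, `ℤ[C_p] → ℤ` (augmentation), `ℤ[ζ_p] → ℤ/p` (`X ↦ 1`), `ℤ → ℤ/p`
(reduction) commutes, and it is a pullback square: the induced ring map
`ℤ[C_p] → ℤ ×_{ℤ/p} ℤ[ζ_p]` is bijective.  Moreover `ℤ → ℤ/p` is surjective, so the
square is a Milnor square. -/
theorem groupRing_milnor_square (p : ℕ) (hp : p.Prime) :
    (∀ x : GroupRingCp p, ((aug p x : ℤ) : ZMod p) = cycloToZMod p (toCyclo p x)) ∧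
    Function.Injective (fun x : GroupRingCp p => (aug p x, toCyclo p x)) ∧
    Set.range (fun x : GroupRingCp p => (aug p x, toCyclo p x)) =
      {ab : ℤ × CycloInt p | ((ab.1 : ℤ) : ZMod p) = cycloToZMod p ab.2} ∧
    Function.Surjective (Int.castRingHom (ZMod p)) := by
  have heval2 : ∀ f : Polynomial ℤ,
      eval₂ (Int.castRingHom (ZMod p)) 1 f = ((f.eval 1 : ℤ) : ZMod p) := by
    intro f; rw [eval₂_at_one]; rfl
  have hPhi1 : (Phi p).eval 1 = (p : ℤ) := by simp [Phi, eval_finset_sum]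
  have hcomm : ∀ x : GroupRingCp p,
      ((aug p x : ℤ) : ZMod p) = cycloToZMod p (toCyclo p x) := by
    intro x
    obtain ⟨f, rfl⟩ := Ideal.Quotient.mk_surjective x
    show ((f.eval 1 : ℤ) : ZMod p) = eval₂ (Int.castRingHom (ZMod p)) 1 f
    rw [heval2]
  refine ⟨hcomm, ?_, ?_, ZMod.intCast_surjective⟩
  · intro x y h
    obtain ⟨f, rfl⟩ := Ideal.Quotient.mk_surjective x
    obtain ⟨g, rfl⟩ := Ideal.Quotient.mk_surjective y
    have h1 : f.eval 1 = g.eval 1 := congrArg Prod.fst h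
    have h2 : (Ideal.Quotient.mk (Ideal.span {Phi p})) f =
        (Ideal.Quotient.mk (Ideal.span {Phi p})) g := congrArg Prod.snd h
    rw [Ideal.Quotient.eq, Ideal.mem_span_singleton] at h2
    obtain ⟨q, hq⟩ := h2
    have hq1 : q.eval 1 = 0 := by
      have := congrArg (fun r => Polynomial.eval 1 r) hq
      simp only [eval_sub, eval_mul, hPhi1, h1, sub_self] at this
      have hp0 : (p : ℤ) ≠ 0 := by exact_mod_cast hp.ne_zero
      exact (mul_eq_zero.mp this.symm).resolve_left hp0
    have hdvd : (X - C (1 : ℤ)) ∣ q := dvd_iff_isRoot.mpr hq1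
    obtain ⟨r, hr⟩ := hdvd
    rw [Ideal.Quotient.eq, Ideal.mem_span_singleton]
    refine ⟨r, ?_⟩
    rw [hq, hr, ← mul_assoc]
    congr 1
    rw [C_1, Phi, geom_sum_mul]
  · ext ⟨a, b⟩
    constructor
    · rintro ⟨x, hx⟩
      simp only [Set.mem_setOf_eq, ← hx]
      exact hcomm x
    · intro hab
      obtain ⟨g, rfl⟩ := Ideal.Quotient.mk_surjective b
      have : ((a : ZMod p)) = ((g.eval 1 : ℤ) : ZMod p) := by
        rw [hab]; exact (heval2 g)
      have hd : (p : ℤ) ∣ a - g.eval 1 :=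
        ((ZMod.intCast_eq_intCast_iff _ _ _).mp this).symm.dvd
      obtain ⟨k, hk⟩ := hd
      refine ⟨Ideal.Quotient.mk _ (g + C k * Phi p), ?_⟩
      have ht : toCyclo p (Ideal.Quotient.mk _ (g + C k * Phi p)) =
          Ideal.Quotient.mk (Ideal.span {Phi p}) g := by
        show Ideal.Quotient.mk (Ideal.span {Phi p}) (g + C k * Phi p) = _
        rw [Ideal.Quotient.eq, Ideal.mem_span_singleton]
        exact ⟨C k, by ring⟩
      have ha : aug p (Ideal.Quotient.mk _ (g + C k * Phi p)) = a := by
        show (g + C k * Phi p).eval 1 = a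
        simp only [eval_add, eval_mul, eval_C, hPhi1]
        linear_combination -hk
      simp only [ht, ha]
end
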